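/- Let α∈(1,2), a_i>0 with max_i a_i=1, N = {i : a_i=1}, and define σ(t) = (Σ_{i=1}^{n+1} a_i²(t_i−t_{i−1})^α)^{1/2} on S_n (t₀=0, t_{n+1}=1). Then σ attains its maximum on S_n, equal to 1, exactly at the #N points z^{(j)}, j∈N, where for j∈N with j<n+1, z^{(j)} = (0,…,0,1,1,…,1) with the first 1 in the j-th coordinate, and z^{(n+1)} = (0,…,0) when n+1∈N. Moreover, for each j∈N, lim_{δ→0} sup { | (1−σ(t)) / ( ½( α|t_j−t_{j−1}−1| − Σ_{1≤i≤n+1, i≠j} a_i²(t_i−t_{i−1})^α ) ) − 1 | : t∈S_n, t≠z^{(j)}, |t−z^{(j)}| ≤ δ } = 0. -/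

import Mathlib

open Finset Real Filter Set


private lemma rpow_le_self' {x α : ℝ} (hx0 : 0 ≤ x) (hx1 : x ≤ 1) (hα : 1 ≤ α) : x ^ α ≤ x := by
  rcases eq_or_lt_of_le hx0 with h | h
  · rw [← h, Real.zero_rpow (by linarith)]
  · calc x^α ≤ x^(1:ℝ) := Real.rpow_le_rpow_of_exponent_ge h hx1 hα
      _ = x := Real.rpow_one x

private lemma tele (n : ℕ) (t : Fin (n+2) → ℝ) :
    ∑ i : Fin (n+1), (t i.succ - t i.castSucc) = t (Fin.last (n+1)) - t 0 := by
  set g : ℕ → ℝ := fun m => if h : m < n+2 then t ⟨m, h⟩ else 0 with hg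
  have h : ∀ i : Fin (n+1), t i.succ - t i.castSucc
      = (fun m : ℕ => g (m+1) - g m) (i : ℕ) := by
    intro i
    have h1 : (i:ℕ)+1 < n+2 := by omega
    have h2 : (i:ℕ) < n+2 := by omega
    simp only [hg, dif_pos h1, dif_pos h2]
    rfl
  calc ∑ i : Fin (n+1), (t i.succ - t i.castSucc)
      = ∑ i : Fin (n+1), (fun m : ℕ => g (m+1) - g m) (i:ℕ) :=
        Finset.sum_congr rfl (fun i _ => h i)
    _ = ∑ m ∈ Finset.range (n+1), (g (m+1) - g m) :=
        Fin.sum_univ_eq_sum_range (fun m => g (m+1) - g m) (n+1)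
    _ = g (n+1) - g 0 := Finset.sum_range_sub g (n+1)
    _ = t (Fin.last (n+1)) - t 0 := by
        simp only [hg, dif_pos (by omega : n+1 < n+2), dif_pos (by omega : 0 < n+2)]
        rfl

private lemma recon (n : ℕ) (t : Fin (n+2) → ℝ) (j : Fin (n+1))
    (ht0 : t 0 = 0)
    (hdj : t j.succ - t j.castSucc = 1)
    (hother : ∀ i : Fin (n+1), i ≠ j → t i.succ - t i.castSucc = 0) :
    t = fun k : Fin (n+2) => if (j:ℕ) < (k:ℕ) then (1:ℝ) else 0 := by
  suffices h : ∀ m (hm : m < n+2), t ⟨m, hm⟩ = if (j:ℕ) < m then (1:ℝ) else 0 by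
    funext k
    have := h k.1 k.2
    simpa using this
  intro m
  induction m with
  | zero =>
    intro hm
    simpa using ht0
  | succ m ih =>
    intro hm
    have hm' : m < n+1 := by omega
    have hmm : m < n+2 := by omega
    by_cases hij : (j:ℕ) = m
    · have hsucc : (j.succ : Fin (n+2)) = ⟨m+1, hm⟩ := Fin.ext (by simp [hij])
      have hcast : (j.castSucc : Fin (n+2)) = ⟨m, hmm⟩ := Fin.ext (by simp [hij])
      rw [hsucc, hcast] at hdj
      have h0 : t ⟨m, hmm⟩ = 0 := by rw [ih hmm, if_neg (by omega)]
      rw [if_pos (by omega)]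
      linarith
    · have hne : (⟨m, hm'⟩ : Fin (n+1)) ≠ j := by
        intro he
        exact hij (by rw [← he])
      have := hother ⟨m, hm'⟩ hne
      have hsucc : ((⟨m, hm'⟩ : Fin (n+1)).succ : Fin (n+2)) = ⟨m+1, hm⟩ := rfl
      have hcast : ((⟨m, hm'⟩ : Fin (n+1)).castSucc : Fin (n+2)) = ⟨m, hmm⟩ := rfl
      rw [hsucc, hcast, sub_eq_zero] at this
      rw [this, ih hmm]
      by_cases hjm : (j:ℕ) < m
      · rw [if_pos hjm, if_pos (by omega)]
      · rw [if_neg hjm, if_neg (by omega)]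

private lemma final_calc {α ε x R s u : ℝ} (hα1 : 1 < α) (hx0 : 0 < x)
    (hαx : α*x ≤ ε) (hαx1 : α*x ≤ 1) (hR0 : 0 ≤ R) (hRx : R ≤ x)
    (hssq : s^2 = u + R) (hs0 : 0 ≤ s) (hs1 : s ≤ 1)
    (hlow : 1 - α*x ≤ u) (hupp : u ≤ 1 - α*x + (α-1)*x^2) :
    |(1-s)/((1/2)*(α*x - R)) - 1| ≤ ε := by
  have hP0 : 0 < α * x - R := by nlinarith [mul_pos (show (0:ℝ) < α - 1 by linarith) hx0]
  have hD0 : 0 < (1/2) * (α * x - R) := by linarith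
  have hprod : (1 - s)*(1 + s) = 1 - u - R := by
    have h : (1 - s)*(1 + s) = 1 - s^2 := by ring
    rw [h, hssq]; ring
  have hα0 : (0:ℝ) < α := by linarith
  have h_s_ge : 1 - α*x ≤ s := by
    nlinarith [hssq, hlow, hR0, mul_nonneg hs0 (by linarith : (0:ℝ) ≤ 1 - s)]
  have h2fac : 0 ≤ (1+α*x)*(1+s) - 2 := by nlinarith [h_s_ge, hαx1, hx0, hα0]
  have key1 : 2*(1-s) ≤ (1+α*x)*((1-s)*(1+s)) := by
    nlinarith [mul_nonneg h2fac (by linarith : (0:ℝ) ≤ 1 - s)]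
  have key2 : (1+α*x)*((1-s)*(1+s)) ≤ (1+α*x)*(α*x - R) := by
    apply mul_le_mul_of_nonneg_left ?_ (by positivity)
    rw [hprod]
    linarith [hlow]
  have hEαP : (α-1)*x^2 ≤ α*x*(α*x - R) := by
    nlinarith [mul_le_mul_of_nonneg_left (show (α-1)*x ≤ α*x - R by linarith)
      (by positivity : (0:ℝ) ≤ α*x), hx0, mul_pos hx0 hx0, hα1]
  have key4 : (1-α*x)*(α*x - R) ≤ 2*(1-s) := by
    nlinarith [hprod, hupp, hEαP, mul_nonneg (by linarith : (0:ℝ) ≤ 1 - s)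
      (by linarith : (0:ℝ) ≤ 1 - s)]
  rw [abs_le]
  constructor
  · have h : 1 - α*x ≤ (1 - s)/((1/2)*(α*x - R)) := by
      rw [le_div_iff₀ hD0]
      nlinarith [key4]
    linarith [hαx]
  · have h : (1 - s)/((1/2)*(α*x - R)) ≤ 1 + α*x := by
      rw [div_le_iff₀ hD0]
      nlinarith [key1, key2]
    linarith [hαx]

/-- for `α ∈ (1,2)`, `σ(t) = (Σ a_i²(t_i−t_{i−1})^α)^{1/2}` attains its
maximum `1` on the simplex exactly at the `#N` points `z⁽ʲ⁾`, `j ∈ N = {i : a_i = 1}`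
(`z⁽ʲ⁾` has `t_j − t_{j−1} = 1`, i.e. extended coordinates
`z⁽ʲ⁾_k = 1` for `k ≥ j`, `0` for `k < j`), together with the local expansion
`1−σ(t) ∼ ½(α|t_j−t_{j−1}−1| − Σ_{i≠j} a_i²(t_i−t_{i−1})^α)` near each `z⁽ʲ⁾`. -/
theorem stmt_14 (n : ℕ) (hn : 1 ≤ n) (α : ℝ) (hα : α ∈ Set.Ioo (1:ℝ) 2)
    (a : Fin (n+1) → ℝ) (ha : ∀ i, 0 < a i) (ha1 : ∀ i, a i ≤ 1) (hamax : ∃ i, a i = 1) :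
    let S : Set (Fin (n+2) → ℝ) :=
      {t | t 0 = 0 ∧ t (Fin.last (n+1)) = 1 ∧ Monotone t}
    let σ : (Fin (n+2) → ℝ) → ℝ :=
      fun t => Real.sqrt (∑ i : Fin (n+1), (a i)^2 * (t i.succ - t i.castSucc) ^ α)
    let N : Finset (Fin (n+1)) := Finset.univ.filter (fun i => a i = 1)
    let z : Fin (n+1) → (Fin (n+2) → ℝ) := fun j k => if (j:ℕ) < (k:ℕ) then 1 else 0
    ((∀ j ∈ N, z j ∈ S ∧ σ (z j) = 1) ∧
     (∀ t ∈ S, σ t ≤ 1) ∧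
     (∀ t ∈ S, σ t = 1 → ∃ j ∈ N, t = z j)) ∧
    (∀ j ∈ N, ∀ ε > 0, ∃ δ > 0, ∀ t ∈ S, t ≠ z j → dist t (z j) ≤ δ →
      |(1 - σ t) /
          ((1/2) * (α * |t j.succ - t j.castSucc - 1|
            - ∑ i ∈ Finset.univ.erase j, (a i)^2 * (t i.succ - t i.castSucc) ^ α)) - 1|
        ≤ ε) := by
  obtain ⟨hα1, hα2⟩ := hα
  intro S σ N z
  have hα0 : (0:ℝ) < α := by linarith
  -- increments of z j
  have hzd : ∀ j i : Fin (n+1), z j i.succ - z j i.castSucc = if i = j then 1 else 0 := by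
    intro j i
    have h1 : ((i.succ : Fin (n+2)) : ℕ) = (i:ℕ)+1 := rfl
    have h2 : ((i.castSucc : Fin (n+2)) : ℕ) = (i:ℕ) := rfl
    simp only [z, h1, h2]
    rcases lt_trichotomy ((i:ℕ)) ((j:ℕ)) with h|h|h
    · rw [if_neg (by omega), if_neg (by omega), if_neg (Fin.ne_of_val_ne (by omega))]
      norm_num
    · rw [if_pos (by omega), if_neg (by omega), if_pos (Fin.ext h)]
      norm_num
    · rw [if_pos (by omega), if_pos (by omega), if_neg (Fin.ne_of_val_ne (by omega))]
      norm_num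
  have hzS : ∀ j : Fin (n+1), z j ∈ S := by
    intro j
    refine ⟨?_, ?_, ?_⟩
    · simp [z]
    · show (if (j:ℕ) < ((Fin.last (n+1) : Fin (n+2)):ℕ) then (1:ℝ) else 0) = 1
      exact if_pos j.isLt
    · intro k l hkl
      have hv : (k:ℕ) ≤ (l:ℕ) := hkl
      simp only [z]
      split_ifs with h1 h2
      · exact le_rfl
      · exact absurd (lt_of_lt_of_le h1 hv) h2
      · norm_num
      · exact le_rfl
  have hσz : ∀ j : Fin (n+1), a j = 1 → σ (z j) = 1 := by
    intro j haj
    have hs : ∑ i : Fin (n+1), (a i)^2 * (z j i.succ - z j i.castSucc) ^ α = 1 := by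
      rw [Finset.sum_eq_single j]
      · rw [hzd j j, if_pos rfl, haj, Real.one_rpow]; norm_num
      · intro b _ hbj
        rw [hzd j b, if_neg hbj, Real.zero_rpow (by linarith), mul_zero]
      · intro h; exact absurd (Finset.mem_univ j) h
    simp only [σ, hs, Real.sqrt_one]
  -- increment facts for t ∈ S
  have hinc : ∀ t ∈ S, (∀ i : Fin (n+1), 0 ≤ t i.succ - t i.castSucc) ∧
      (∑ i : Fin (n+1), (t i.succ - t i.castSucc)) = 1 ∧
      (∀ i : Fin (n+1), t i.succ - t i.castSucc ≤ 1) := by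
    intro t ht
    obtain ⟨h0, hl, hm⟩ := ht
    have hd0 : ∀ i : Fin (n+1), 0 ≤ t i.succ - t i.castSucc := fun i =>
      sub_nonneg.2 (hm (Fin.castSucc_le_succ i))
    have hsum : (∑ i : Fin (n+1), (t i.succ - t i.castSucc)) = 1 := by
      rw [tele, hl, h0]; ring
    refine ⟨hd0, hsum, fun i => ?_⟩
    calc t i.succ - t i.castSucc ≤ ∑ k : Fin (n+1), (t k.succ - t k.castSucc) :=
          Finset.single_le_sum (fun k _ => hd0 k) (Finset.mem_univ i)
      _ = 1 := hsum
  -- reconstruction from a unit increment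
  have hrecon : ∀ t ∈ S, ∀ j : Fin (n+1), t j.succ - t j.castSucc = 1 → t = z j := by
    intro t ht j hdj1
    obtain ⟨hd0, hsum, hd1⟩ := hinc t ht
    have hzero : ∑ i ∈ Finset.univ.erase j, (t i.succ - t i.castSucc) = 0 := by
      have h2 := Finset.add_sum_erase Finset.univ
        (fun i : Fin (n+1) => t i.succ - t i.castSucc) (Finset.mem_univ j)
      rw [hsum, hdj1] at h2
      linarith
    have hrest : ∀ i : Fin (n+1), i ≠ j → t i.succ - t i.castSucc = 0 := fun i hij =>
      (Finset.sum_eq_zero_iff_of_nonneg (fun i _ => hd0 i)).1 hzero i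
        (Finset.mem_erase.2 ⟨hij, Finset.mem_univ i⟩)
    exact recon n t j ht.1 hdj1 hrest
  -- termwise bound
  have htb : ∀ t ∈ S, ∀ i : Fin (n+1),
      (a i)^2 * (t i.succ - t i.castSucc) ^ α ≤ t i.succ - t i.castSucc := by
    intro t ht i
    obtain ⟨hd0, hsum, hd1⟩ := hinc t ht
    calc (a i)^2 * (t i.succ - t i.castSucc) ^ α
        ≤ 1 * (t i.succ - t i.castSucc) := by
          apply mul_le_mul
          · nlinarith [ha i, ha1 i]
          · exact rpow_le_self' (hd0 i) (hd1 i) hα1.le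
          · exact Real.rpow_nonneg (hd0 i) α
          · norm_num
      _ = _ := one_mul _
  have hle : ∀ t ∈ S, σ t ≤ 1 := by
    intro t ht
    obtain ⟨hd0, hsum, hd1⟩ := hinc t ht
    have hsle : ∑ i : Fin (n+1), (a i)^2 * (t i.succ - t i.castSucc) ^ α ≤ 1 := by
      calc ∑ i : Fin (n+1), (a i)^2 * (t i.succ - t i.castSucc) ^ α
          ≤ ∑ i : Fin (n+1), (t i.succ - t i.castSucc) :=
            Finset.sum_le_sum (fun i _ => htb t ht i)
        _ = 1 := hsum
    have h2 : Real.sqrt (∑ i : Fin (n+1), (a i)^2 * (t i.succ - t i.castSucc) ^ α)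
        ≤ Real.sqrt 1 := Real.sqrt_le_sqrt hsle
    rw [Real.sqrt_one] at h2
    exact h2
  have huniq : ∀ t ∈ S, σ t = 1 → ∃ j ∈ N, t = z j := by
    intro t ht hσ1
    obtain ⟨hd0, hsum, hd1⟩ := hinc t ht
    have hnn : 0 ≤ ∑ i : Fin (n+1), (a i)^2 * (t i.succ - t i.castSucc) ^ α :=
      Finset.sum_nonneg fun i _ => mul_nonneg (sq_nonneg _) (Real.rpow_nonneg (hd0 i) α)
    have hSum1 : ∑ i : Fin (n+1), (a i)^2 * (t i.succ - t i.castSucc) ^ α = 1 := by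
      have h : Real.sqrt (∑ i : Fin (n+1), (a i)^2 * (t i.succ - t i.castSucc) ^ α) = 1 := hσ1
      rw [← Real.sq_sqrt hnn, h]; norm_num
    have hterm : ∀ i : Fin (n+1),
        (a i)^2 * (t i.succ - t i.castSucc) ^ α = t i.succ - t i.castSucc := by
      have hzero : ∑ i : Fin (n+1),
          ((t i.succ - t i.castSucc) - (a i)^2 * (t i.succ - t i.castSucc) ^ α) = 0 := by
        rw [Finset.sum_sub_distrib, hsum, hSum1, sub_self]
      intro i
      have := (Finset.sum_eq_zero_iff_of_nonneg
        (fun i _ => sub_nonneg.2 (htb t ht i))).1 hzero i (Finset.mem_univ i)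
      linarith
    have hex : ∃ j : Fin (n+1), t j.succ - t j.castSucc ≠ 0 := by
      by_contra h
      push_neg at h
      rw [Finset.sum_eq_zero (fun i _ => h i)] at hsum
      norm_num at hsum
    obtain ⟨j, hdj0⟩ := hex
    have hdjpos : 0 < t j.succ - t j.castSucc := lt_of_le_of_ne (hd0 j) (Ne.symm hdj0)
    have hps : (t j.succ - t j.castSucc) ^ α ≤ t j.succ - t j.castSucc :=
      rpow_le_self' (hd0 j) (hd1 j) hα1.le
    have h1 : t j.succ - t j.castSucc ≤ (t j.succ - t j.castSucc) ^ α := by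
      have hsq : (a j)^2 ≤ 1 := by nlinarith [ha j, ha1 j]
      nlinarith [hterm j, Real.rpow_nonneg (hd0 j) α, hsq]
    have hdj1 : t j.succ - t j.castSucc = 1 := by
      by_contra hne
      have hlt : t j.succ - t j.castSucc < 1 := lt_of_le_of_ne (hd1 j) hne
      have := Real.rpow_lt_rpow_of_exponent_gt hdjpos hlt hα1
      rw [Real.rpow_one] at this
      linarith
    have haj : a j = 1 := by
      have := hterm j
      rw [hdj1, Real.one_rpow, mul_one] at this
      nlinarith [ha j]
    exact ⟨j, Finset.mem_filter.2 ⟨Finset.mem_univ j, haj⟩, hrecon t ht j hdj1⟩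
  refine ⟨⟨fun j hj => ⟨hzS j, hσz j (Finset.mem_filter.1 hj).2⟩, hle, huniq⟩, ?_⟩
  intro j hj ε hε
  have haj : a j = 1 := (Finset.mem_filter.1 hj).2
  refine ⟨min (ε/(2*α)) (1/4), by positivity, ?_⟩
  intro t ht htne hdist
  obtain ⟨hd0, hsum, hd1⟩ := hinc t ht
  set x : ℝ := 1 - (t j.succ - t j.castSucc) with hxdef
  have hx1 : x ≤ 1 := by have := hd0 j; simp only [hxdef]; linarith
  have hx0 : 0 < x := by
    rcases lt_or_ge 0 x with h | h
    · exact h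
    · exact absurd (hrecon t ht j (by simp only [hxdef] at h; linarith [hd1 j])) htne
  -- x is small
  have hzsucc : z j j.succ = 1 := by
    show (if (j:ℕ) < ((j.succ : Fin (n+2)):ℕ) then (1:ℝ) else 0) = 1
    exact if_pos (Nat.lt_succ_self _)
  have hzcast : z j j.castSucc = 0 := by
    show (if (j:ℕ) < ((j.castSucc : Fin (n+2)):ℕ) then (1:ℝ) else 0) = 0
    exact if_neg (lt_irrefl _)
  have h1d : |t j.succ - 1| ≤ min (ε/(2*α)) (1/4) := by
    have h := dist_le_pi_dist t (z j) j.succ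
    rw [Real.dist_eq, hzsucc] at h
    exact h.trans hdist
  have h2d : |t j.castSucc - 0| ≤ min (ε/(2*α)) (1/4) := by
    have h := dist_le_pi_dist t (z j) j.castSucc
    rw [Real.dist_eq, hzcast] at h
    exact h.trans hdist
  have hxδ : x ≤ 2 * min (ε/(2*α)) (1/4) := by
    have h1 := abs_le.1 h1d
    have h2 := abs_le.1 h2d
    simp only [hxdef]
    linarith [h1.1, h2.2]
  have hαx : α * x ≤ ε := by
    have h1 : x ≤ ε/α := by
      have := min_le_left (ε/(2*α)) (1/4)
      have h2 : 2 * (ε/(2*α)) = ε/α := by field_simp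
      linarith [hxδ, mul_le_mul_of_nonneg_left this (by norm_num : (0:ℝ) ≤ 2)]
    calc α * x ≤ α * (ε/α) := mul_le_mul_of_nonneg_left h1 hα0.le
      _ = ε := by field_simp
  have hαx1 : α * x ≤ 1 := by
    have h1 : x ≤ 1/2 := by
      have := min_le_right (ε/(2*α)) (1/4)
      linarith [hxδ]
    nlinarith
  -- R and its bounds
  set R : ℝ := ∑ i ∈ Finset.univ.erase j, (a i)^2 * (t i.succ - t i.castSucc) ^ α with hRdef
  have hR0 : 0 ≤ R := Finset.sum_nonneg fun i _ =>
    mul_nonneg (sq_nonneg _) (Real.rpow_nonneg (hd0 i) α)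
  have hRx : R ≤ x := by
    have h1 : R ≤ ∑ i ∈ Finset.univ.erase j, (t i.succ - t i.castSucc) :=
      Finset.sum_le_sum fun i _ => htb t ht i
    have h2 := Finset.add_sum_erase Finset.univ
      (fun i : Fin (n+1) => t i.succ - t i.castSucc) (Finset.mem_univ j)
    rw [hsum] at h2
    simp only [hxdef]
    linarith
  have hxabs : |t j.succ - t j.castSucc - 1| = x := by
    have h1 : t j.succ - t j.castSucc - 1 = -x := by simp only [hxdef]; ring
    rw [h1, abs_neg, abs_of_pos hx0]
  -- σ t and its square
  have hssq : (σ t)^2 = (1-x)^α + R := by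
    have hnn : 0 ≤ ∑ i : Fin (n+1), (a i)^2 * (t i.succ - t i.castSucc) ^ α :=
      Finset.sum_nonneg fun i _ => mul_nonneg (sq_nonneg _) (Real.rpow_nonneg (hd0 i) α)
    have hsplit := Finset.add_sum_erase Finset.univ
      (fun i : Fin (n+1) => (a i)^2 * (t i.succ - t i.castSucc) ^ α) (Finset.mem_univ j)
    have hd : t j.succ - t j.castSucc = 1 - x := by simp only [hxdef]; ring
    calc (σ t)^2 = ∑ i : Fin (n+1), (a i)^2 * (t i.succ - t i.castSucc) ^ α :=
          Real.sq_sqrt hnn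
      _ = (a j)^2 * (t j.succ - t j.castSucc) ^ α + R := hsplit.symm
      _ = (1-x)^α + R := by rw [haj, hd]; norm_num
  -- Bernoulli bounds
  have hu0 : (0:ℝ) ≤ 1 - x := by linarith
  have hlow : 1 - α*x ≤ (1-x)^α := by
    have h := one_add_mul_self_le_rpow_one_add (s := -x) (by linarith) (p := α) hα1.le
    have e1 : (1:ℝ) + -x = 1 - x := by ring
    have e2 : (1:ℝ) + α * -x = 1 - α*x := by ring
    rw [e1, e2] at h
    exact h
  have hupp : (1-x)^α ≤ 1 - α*x + (α-1)*x^2 := by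
    have hsplit := Real.rpow_add' hu0 (show (1:ℝ) + (α-1) ≠ 0 by
      intro h; rw [show (1:ℝ)+(α-1) = α by ring] at h; exact hα0.ne' h)
    rw [show (1:ℝ)+(α-1) = α by ring, Real.rpow_one] at hsplit
    have hb : (1-x)^(α-1) ≤ 1 - (α-1)*x := by
      have h2 := rpow_one_add_le_one_add_mul_self (s := -x) (by linarith)
        (p := α-1) (by linarith) (by linarith)
      rw [show (1:ℝ) + -x = 1 - x by ring, show (1:ℝ) + (α-1) * -x = 1 - (α-1)*x by ring] at h2
      exact h2
    calc (1-x)^α = (1-x) * (1-x)^(α-1) := hsplit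
      _ ≤ (1-x) * (1 - (α-1)*x) := mul_le_mul_of_nonneg_left hb hu0
      _ = 1 - α*x + (α-1)*x^2 := by ring
  rw [hxabs]
  exact final_calc hα1 hx0 hαx hαx1 hR0 hRx hssq (Real.sqrt_nonneg _) (hle t ht) hlow hupp
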